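/- arXiv:2104.09733 — 6 statements merged into one kernel-verified Lean document; each statement's English description precedes it below -/
import Mathlib

section
/- For any two landmarks r, r' in R, the distance in the meta-graph equals the distance in the original graph: d_M(r,r') = d_G(r,r'). -/
open SimpleGraph

variable {V : Type}

/-- `(r, d_G(u,r))` is an entry of the path labelling `L(u)`: some shortest
`u`-`r` path meets the landmark set `R` only in `r`. -/
def LEntry (G : SimpleGraph V) (R : Set V) (u r : V) : Prop :=
  ∃ w : G.Walk u r, w.length = G.dist u r ∧ ∀ x ∈ w.support, x ∈ R → x = r

/-- `(r, r')` is an edge of the meta-graph `M`: some shortest `r`-`r'` path in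
`G` contains no landmark other than `r` and `r'`. Its weight is `d_G(r,r')`. -/
def MEdge (G : SimpleGraph V) (R : Set V) (r r' : V) : Prop :=
  r ≠ r' ∧ ∃ w : G.Walk r r', w.length = G.dist r r' ∧
    ∀ x ∈ w.support, x ∈ R → x = r ∨ x = r'

/-- There is a walk in the weighted meta-graph from `r` to `r'` of total
weight `n` (each meta-edge `(s,s')` having weight `d_G(s,s')`). -/
inductive MWalkLen (G : SimpleGraph V) (R : Set V) : V → V → ℕ → Prop
  | nil (r : V) : MWalkLen G R r r 0
  | cons {r r' r'' : V} {n : ℕ} (h : MEdge G R r r') (hw : MWalkLen G R r' r'' n) :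
      MWalkLen G R r r'' (G.dist r r' + n)

/-- Weighted shortest-path distance `d_M` in the meta-graph (`⊤` if unreachable). -/
noncomputable def dM (G : SimpleGraph V) (R : Set V) (r r' : V) : ℕ∞ :=
  sInf {x : ℕ∞ | ∃ n : ℕ, MWalkLen G R r r' n ∧ x = (n : ℕ∞)}

/-- The sketch upper bound
`d⊤_uv = min {δ_ur + d_M(r,r') + δ_vr' : (r,δ_ur) ∈ L(u), (r',δ_vr') ∈ L(v)}`. -/
noncomputable def dTop (G : SimpleGraph V) (R : Set V) (u v : V) : ℕ∞ :=
  sInf {x : ℕ∞ | ∃ r r', r ∈ R ∧ r' ∈ R ∧ LEntry G R u r ∧ LEntry G R v r' ∧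
    x = (G.dist u r : ℕ∞) + dM G R r r' + (G.dist v r' : ℕ∞)}

/-!
A shortest `r`-`r'` path, cut at the landmarks it passes through, is a walk in `M` whose
meta-edges are the pieces; each piece is itself a shortest path, so its weight is its length
and the total weight is `d_G(r,r')`. Conversely, replacing every meta-edge of a walk in `M` by
a shortest path of `G` gives a walk in `G` of the same length, so `d_G ≤ d_M`.
-/

namespace SimpleGraph

variable {G : SimpleGraph V} {R : Set V}

lemma Walk.exists_eq_append_of_mem_of_ne {u v : V} (w : G.Walk u v) (hv : v ∈ R) (huv : u ≠ v) :
    ∃ s ∈ R, ∃ (w₁ : G.Walk u s) (w₂ : G.Walk s v), w = w₁.append w₂ ∧ w₁.length ≠ 0 ∧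
      ∀ x ∈ w₁.support, x ∈ R → x = u ∨ x = s := by
  induction w with
  | nil => exact absurd rfl huv
  | @cons u b v hub p ih =>
    by_cases hb : b ∈ R
    · exact ⟨b, hb, .cons hub .nil, p, rfl, by simp, by simp⟩
    · obtain ⟨s, hs, w₁, w₂, rfl, -, hw₁⟩ := ih hv fun hbv => hb (hbv ▸ hv)
      refine ⟨s, hs, .cons hub w₁, w₂, rfl, by simp, fun x hx hxR => ?_⟩
      rcases (Walk.mem_support_iff _).mp hx with rfl | hx
      · exact .inl rfl
      · exact .inr ((hw₁ x hx hxR).resolve_left fun hxb => hb (hxb ▸ hxR))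

end SimpleGraph

/-- Walks in `M` that stay in its vertex set `R`. -/
inductive LandmarkWalkLen (G : SimpleGraph V) (R : Set V) : V → V → ℕ → Prop
  | nil {r : V} (hr : r ∈ R) : LandmarkWalkLen G R r r 0
  | cons {r r' r'' : V} {n : ℕ} (hr : r ∈ R) (h : MEdge G R r r')
      (hw : LandmarkWalkLen G R r' r'' n) : LandmarkWalkLen G R r r'' (G.dist r r' + n)

namespace LandmarkWalkLen

variable {G : SimpleGraph V} {R : Set V}

lemma toMWalkLen {r r' : V} {n : ℕ} (h : LandmarkWalkLen G R r r' n) : MWalkLen G R r r' n := by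
  induction h with
  | nil => exact .nil _
  | cons _ he _ ih => exact .cons he ih

lemma of_length_eq_dist {r r' : V} (hr : r ∈ R) (hr' : r' ∈ R) (w : G.Walk r r')
    (hw : w.length = G.dist r r') : LandmarkWalkLen G R r r' w.length := by
  by_cases hrr' : r = r'
  · subst hrr'
    rw [hw, dist_self]
    exact .nil hr
  obtain ⟨s, hs, w₁, w₂, hsplit, hw₁0, hw₁R⟩ := w.exists_eq_append_of_mem_of_ne hr' hrr'
  rw [hsplit] at hw ⊢
  have hw₁ : w₁.length = G.dist r s :=
    length_eq_dist_of_subwalk hw (Walk.isSubwalk_of_append_left rfl)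
  have hw₂ : w₂.length = G.dist s r' :=
    length_eq_dist_of_subwalk hw (Walk.isSubwalk_of_append_right rfl)
  have hrs : r ≠ s := by
    rintro rfl
    exact hw₁0 (hw₁.trans dist_self)
  rw [Walk.length_append, hw₁]
  exact .cons hr ⟨hrs, w₁, hw₁, hw₁R⟩ (of_length_eq_dist hs hr' w₂ hw₂)
termination_by w.length
decreasing_by rw [hsplit, Walk.length_append]; omega

end LandmarkWalkLen

lemma MWalkLen.exists_walk {G : SimpleGraph V} {R : Set V} {r r' : V} {n : ℕ}
    (h : MWalkLen G R r r' n) : ∃ w : G.Walk r r', w.length = n := by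
  induction h with
  | nil r => exact ⟨.nil, rfl⟩
  | cons he _ ih =>
    obtain ⟨-, w₁, hw₁, -⟩ := he
    obtain ⟨w₂, rfl⟩ := ih
    exact ⟨w₁.append w₂, by rw [Walk.length_append, hw₁]⟩

/-- for landmarks `r, r'`, the meta-graph distance equals the
distance in the original graph. -/
theorem dM_eq_dist (G : SimpleGraph V) (hG : G.Connected) (R : Set V)
    (r r' : V) (hr : r ∈ R) (hr' : r' ∈ R) :
    dM G R r r' = (G.dist r r' : ℕ∞) := by
  obtain ⟨w, hw⟩ := hG.exists_walk_length_eq_dist r r'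
  apply le_antisymm
  · have hM : MWalkLen G R r r' w.length :=
      (LandmarkWalkLen.of_length_eq_dist hr hr' w hw).toMWalkLen
    exact sInf_le ⟨w.length, hM, by rw [hw]⟩
  · refine le_sInf ?_
    rintro _ ⟨n, hn, rfl⟩
    obtain ⟨p, rfl⟩ := hn.exists_walk
    exact_mod_cast G.dist_le p
end

section
/- If u and v are vertices such that at least one shortest u-v path in G passes through some landmark, then the sketch upper bound equals the true distance: d⊤_uv = d_G(u,v), where d⊤_uv = min{δ_ur + d_M(r,r') + δ_vr' : (r,δ_ur) ∈ L(u), (r',δ_vr') ∈ L(v)}. -/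
open SimpleGraph

variable {V : Type}

/-!
Cut a shortest `u`-`v` path at its first landmark `r` and its last landmark `r'`. The outer
pieces witness `(r, d(u,r)) ∈ L(u)` and `(r', d(v,r')) ∈ L(v)`, and the middle piece, a shortest
`r`-`r'` path, splits at its landmarks into meta-edges, so `d_M(r,r') ≤ d(r,r')` and
`d⊤_uv ≤ d(u,v)`. Conversely, every meta-walk is realised by a walk in `G` of the same weight, so
each candidate sum is at least `d(u,v)` by the triangle inequality.
-/

namespace SimpleGraph

variable {G : SimpleGraph V}

theorem Walk.exists_eq_append_of_exists_mem_support {S : Set V} {u v : V} (w : G.Walk u v)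
    (h : ∃ x ∈ w.support, x ∈ S) :
    ∃ r ∈ S, ∃ (p : G.Walk u r) (q : G.Walk r v),
      w = p.append q ∧ ∀ x ∈ p.support, x ∈ S → x = r := by
  induction w with
  | nil =>
    obtain ⟨x, hx, hxS⟩ := h
    obtain rfl := List.mem_singleton.mp hx
    exact ⟨x, hxS, nil, nil, rfl, by simp⟩
  | @cons a b c e w ih =>
    by_cases ha : a ∈ S
    · exact ⟨a, ha, nil, cons e w, rfl, by simp⟩
    · have hw : ∃ x ∈ w.support, x ∈ S := by
        obtain ⟨x, hx, hxS⟩ := h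
        rcases List.mem_cons.mp hx with rfl | hx
        · exact absurd hxS ha
        · exact ⟨x, hx, hxS⟩
      obtain ⟨r, hr, p, q, rfl, hp⟩ := ih hw
      refine ⟨r, hr, cons e p, q, rfl, fun x hx hxS => ?_⟩
      rcases List.mem_cons.mp hx with rfl | hx
      · exact absurd hxS ha
      · exact hp x hx hxS

variable {R : Set V}

theorem MWalkLen.exists_walk {r r' : V} {n : ℕ} (h : MWalkLen G R r r' n) :
    ∃ w : G.Walk r r', w.length = n := by
  induction h with
  | nil r => exact ⟨.nil, rfl⟩
  | cons hedge _ ih =>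
    obtain ⟨-, p, hp, -⟩ := hedge
    obtain ⟨q, hq⟩ := ih
    exact ⟨p.append q, by rw [Walk.length_append, hp, hq]⟩

theorem edist_le_dM (r r' : V) : G.edist r r' ≤ dM G R r r' := by
  refine le_sInf ?_
  rintro _ ⟨n, hn, rfl⟩
  obtain ⟨w, rfl⟩ := hn.exists_walk
  exact edist_le w

/-- Cutting a shortest walk at its first landmark after the start splits off a meta-edge. -/
theorem MWalkLen.of_length_eq_dist {r v : V} (hr : r ∈ R) (hv : v ∈ R) (q : G.Walk r v)
    (hq : q.length = G.dist r v) : MWalkLen G R r v (G.dist r v) := by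
  induction hn : q.length using Nat.strong_induction_on generalizing r with
  | _ n ih =>
    cases q with
    | nil => simpa using MWalkLen.nil _
    | cons e q' =>
      obtain ⟨r₁, hr₁, p, q₁, rfl, hp⟩ :=
        q'.exists_eq_append_of_exists_mem_support ⟨v, q'.end_mem_support, hv⟩
      replace hq : ((Walk.cons e p).append q₁).length = G.dist r v := hq
      have hfirst := length_eq_dist_of_subwalk hq (Walk.isSubwalk_of_append_left rfl)
      have hrest := length_eq_dist_of_subwalk hq (Walk.isSubwalk_of_append_right rfl)
      have hne : r ≠ r₁ := by
        rintro rfl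
        simp at hfirst
      have hedge : MEdge G R r r₁ := ⟨hne, Walk.cons e p, hfirst, fun x hx hxR => by
        rcases List.mem_cons.mp hx with rfl | hx
        · exact .inl rfl
        · exact .inr (hp x hx hxR)⟩
      have hdist : G.dist r v = G.dist r r₁ + G.dist r₁ v := by
        rw [← hq, Walk.length_append, hfirst, hrest]
      rw [hdist]
      refine .cons hedge (ih q₁.length ?_ hr₁ q₁ hrest rfl)
      simp [← hn]

theorem dM_le_dist {r r' : V} (hr : r ∈ R) (hr' : r' ∈ R) (h : G.Reachable r r') :
    dM G R r r' ≤ G.dist r r' := by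
  obtain ⟨q, hq⟩ := h.exists_walk_length_eq_dist
  exact sInf_le ⟨_, MWalkLen.of_length_eq_dist hr hr' q hq, rfl⟩

theorem dist_le_dTop (u v : V) : (G.dist u v : ℕ∞) ≤ dTop G R u v := by
  refine le_sInf ?_
  rintro _ ⟨s, s', -, -, ⟨p, hp, -⟩, ⟨p', hp', -⟩, rfl⟩
  calc (G.dist u v : ℕ∞) ≤ G.edist u v := ENat.natCast_toNat_le_self _
    _ ≤ G.edist u s' + G.edist s' v := G.edist_triangle
    _ ≤ G.edist u s + G.edist s s' + G.edist v s' := by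
      rw [edist_comm (u := s')]
      gcongr
      exact G.edist_triangle
    _ ≤ G.dist u s + dM G R s s' + G.dist v s' := by
      gcongr
      · exact hp ▸ edist_le p
      · exact edist_le_dM s s'
      · exact hp' ▸ edist_le p'

end SimpleGraph

theorem dTop_eq_dist_of_covered_general (G : SimpleGraph V)
    (R : Set V) (u v : V)
    (h : ∃ w : G.Walk u v, w.length = G.dist u v ∧ ∃ x ∈ w.support, x ∈ R) :
    dTop G R u v = (G.dist u v : ℕ∞) := by
  obtain ⟨w, hw, hwR⟩ := h
  obtain ⟨r, hr, p, q, rfl, hp⟩ := w.exists_eq_append_of_exists_mem_support hwR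
  obtain ⟨r', hr', p', q', hq, hp'⟩ :=
    q.reverse.exists_eq_append_of_exists_mem_support ⟨r, by simp, hr⟩
  rw [← q.reverse_reverse, hq, Walk.reverse_append] at hw
  have hpu := length_eq_dist_of_subwalk hw (Walk.isSubwalk_of_append_left rfl)
  have hmid := length_eq_dist_of_subwalk hw ⟨p, p'.reverse, Walk.append_assoc _ _ _⟩
  have hpv := length_eq_dist_of_subwalk hw
    (Walk.isSubwalk_of_append_right (Walk.append_assoc _ _ _))
  refine le_antisymm ?_ (dist_le_dTop u v)
  calc dTop G R u v ≤ G.dist u r + dM G R r r' + G.dist v r' :=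
        sInf_le ⟨r, r', hr, hr', ⟨p, hpu, hp⟩, ⟨p', by simpa [dist_comm] using hpv, hp'⟩, rfl⟩
    _ ≤ G.dist u r + G.dist r r' + G.dist v r' := by
        gcongr
        exact dM_le_dist hr hr' q'.reverse.reachable
    _ = G.dist u v := by
        rw [dist_comm (u := v), ← hpu, ← hmid, ← hpv, ← hw]
        simp [add_assoc]

/-- if some shortest `u`-`v` path passes through a landmark, then
the sketch upper bound equals the true distance. -/
theorem dTop_eq_dist_of_covered (G : SimpleGraph V) (hG : G.Connected)
    (R : Set V) (u v : V) (hu : u ∉ R) (hv : v ∉ R)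
    (h : ∃ w : G.Walk u v, w.length = G.dist u v ∧ ∃ x ∈ w.support, x ∈ R) :
    dTop G R u v = (G.dist u v : ℕ∞) :=
  dTop_eq_dist_of_covered_general G R u v h
end

section
/- If p is a shortest u-v path in G that passes through at least one landmark, let r be the landmark on p closest to u and r' the landmark on p closest to v (possibly r = r'). Then (r, d_G(u,r)) ∈ L(u), (r', d_G(v,r')) ∈ L(v), and d_G(u,r) + d_G(r,r') + d_G(r',v) = d_G(u,v). -/
/-!
Every subwalk of a shortest walk is a shortest walk. Hence the prefix of `p` up to `r` is a
shortest `u`-`r` walk meeting `R` only in `r`, and likewise for the prefix of `p.reverse` up to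
`r'`. Since no landmark precedes `r` on `p`, the landmark `r'` lies on the shortest `r`-`v`
suffix of `p`, and splitting `p` at `r` and then at `r'` gives the distance identity.
-/

open SimpleGraph

variable {V : Type}

namespace SimpleGraph.Walk

variable {G : SimpleGraph V} [DecidableEq V] {u v w x : V}

lemma length_takeUntil_eq_dist (p : G.Walk u v) (hp : p.length = G.dist u v)
    (hw : w ∈ p.support) : (p.takeUntil w hw).length = G.dist u w :=
  length_eq_dist_of_subwalk hp (p.isSubwalk_takeUntil hw)

lemma length_dropUntil_eq_dist (p : G.Walk u v) (hp : p.length = G.dist u v)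
    (hw : w ∈ p.support) : (p.dropUntil w hw).length = G.dist w v :=
  length_eq_dist_of_subwalk hp (p.isSubwalk_dropUntil hw)

lemma dist_add_dist_eq_of_mem_support (p : G.Walk u v) (hp : p.length = G.dist u v)
    (hw : w ∈ p.support) : G.dist u w + G.dist w v = G.dist u v := by
  rw [← p.length_takeUntil_eq_dist hp hw, ← p.length_dropUntil_eq_dist hp hw,
    ← length_append, take_spec, hp]

lemma mem_support_dropUntil_of_mem_takeUntil_imp_eq (p : G.Walk u v) (hw : w ∈ p.support)
    (hx : x ∈ p.support) (hxw : x ∈ (p.takeUntil w hw).support → x = w) :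
    x ∈ (p.dropUntil w hw).support := by
  rw [← p.take_spec hw, mem_support_append_iff] at hx
  rcases hx with hx | hx
  · obtain rfl := hxw hx
    exact start_mem_support _
  · exact hx

end SimpleGraph.Walk

lemma LEntry.of_takeUntil [DecidableEq V] {G : SimpleGraph V} {R : Set V} {u v r : V}
    (p : G.Walk u v) (hp : p.length = G.dist u v) (hrp : r ∈ p.support)
    (hclose : ∀ x ∈ (p.takeUntil r hrp).support, x ∈ R → x = r) : LEntry G R u r :=
  ⟨p.takeUntil r hrp, p.length_takeUntil_eq_dist hp hrp, hclose⟩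

theorem label_entries_from_shortest_path_general [DecidableEq V] (G : SimpleGraph V)
    (R : Set V) (u v : V)
    (p : G.Walk u v) (hp : p.length = G.dist u v)
    (r r' : V) (hr' : r' ∈ R)
    (hrp : r ∈ p.support) (hr'p : r' ∈ p.reverse.support)
    (hclose : ∀ x ∈ (p.takeUntil r hrp).support, x ∈ R → x = r)
    (hclose' : ∀ x ∈ (p.reverse.takeUntil r' hr'p).support, x ∈ R → x = r') :
    LEntry G R u r ∧ LEntry G R v r' ∧
      G.dist u r + G.dist r r' + G.dist r' v = G.dist u v := by
  have hp_rev : p.reverse.length = G.dist v u := by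
    rw [Walk.length_reverse, hp, dist_comm]
  have hr'_suffix : r' ∈ (p.dropUntil r hrp).support :=
    p.mem_support_dropUntil_of_mem_takeUntil_imp_eq hrp (by simpa using hr'p) (hclose r' · hr')
  refine ⟨LEntry.of_takeUntil p hp hrp hclose,
    LEntry.of_takeUntil p.reverse hp_rev hr'p hclose', ?_⟩
  rw [add_assoc, (p.dropUntil r hrp).dist_add_dist_eq_of_mem_support
    (p.length_dropUntil_eq_dist hp hrp) hr'_suffix, p.dist_add_dist_eq_of_mem_support hp hrp]

/-- if `p` is a shortest `u`-`v` path, `r` is the landmark on `p`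
closest to `u` and `r'` the landmark on `p` closest to `v`, then
`(r, d_G(u,r)) ∈ L(u)`, `(r', d_G(v,r')) ∈ L(v)`, and
`d_G(u,r) + d_G(r,r') + d_G(r',v) = d_G(u,v)`. -/
theorem label_entries_from_shortest_path [DecidableEq V] (G : SimpleGraph V) (hG : G.Connected)
    (R : Set V) (u v : V) (hu : u ∉ R) (hv : v ∉ R)
    (p : G.Walk u v) (hp : p.length = G.dist u v)
    (r r' : V) (hr : r ∈ R) (hr' : r' ∈ R)
    (hrp : r ∈ p.support) (hr'p : r' ∈ p.reverse.support)
    (hclose : ∀ x ∈ (p.takeUntil r hrp).support, x ∈ R → x = r)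
    (hclose' : ∀ x ∈ (p.reverse.takeUntil r' hr'p).support, x ∈ R → x = r') :
    LEntry G R u r ∧ LEntry G R v r' ∧
      G.dist u r + G.dist r r' + G.dist r' v = G.dist u v :=
  label_entries_from_shortest_path_general G R u v p hp r r' hr' hrp hr'p hclose hclose'
end

section
/- If p is a shortest path between landmarks r and r' in G, and r = s_0, s_1, ..., s_k = r' are the landmarks on p listed in order of their occurrence along p, then each consecutive pair (s_i, s_{i+1}) is an edge of the meta-graph M, and the weights satisfy σ(s_0,s_1) + ... + σ(s_{k-1},s_k) = d_G(r,r'). Consequently d_M(r,r') ≤ d_G(r,r'). -/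
open SimpleGraph

variable {V : Type}

/-!
Induct along the shortest path, adding one edge `a a'` at its front at a time. If `a'` is a
landmark, the edge itself is a meta-edge of weight `1`. Otherwise the first meta-edge `a' s`
extends to `a s`: since subwalks of shortest walks are shortest, `s` lies on a shortest
`a`-`r'` path through `a'`, so `d(a, s) = d(a', s) + 1`. Either way the meta-edge weights still
add up to the length of the path, and the meta-walk they form witnesses `d_M(r,r') ≤ d_G(r,r')`.
-/

namespace SimpleGraph.Walk

lemma dist_add_dist_of_length_eq_dist {G : SimpleGraph V} {u v w : V} {p : G.Walk u v}
    (hp : p.length = G.dist u v) (hw : w ∈ p.support) : G.dist u w + G.dist w v = G.dist u v := by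
  classical
  have hsplit := congrArg length (p.take_spec hw)
  rw [length_append, length_eq_dist_of_subwalk hp (p.isSubwalk_takeUntil hw),
    length_eq_dist_of_subwalk hp (p.isSubwalk_dropUntil hw)] at hsplit
  rw [hsplit, hp]

end SimpleGraph.Walk

section MetaGraph

variable {G : SimpleGraph V} {R : Set V}

lemma MEdge.of_adj {a b : V} (h : G.Adj a b) : MEdge G R a b :=
  ⟨h.ne, h.toWalk, by simp [dist_eq_one_iff_adj.mpr h], by simp⟩

lemma MEdge.cons_of_not_mem {a a' s : V} (h : G.Adj a a') (ha' : a' ∉ R)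
    (hdist : G.dist a s = G.dist a' s + 1) (he : MEdge G R a' s) : MEdge G R a s := by
  obtain ⟨-, w, hw, hwR⟩ := he
  refine ⟨fun has => by simp [has] at hdist, w.cons h, by simp [hw, hdist], ?_⟩
  intro x hx hxR
  rw [Walk.support_cons, List.mem_cons] at hx
  rcases hx with rfl | hx
  · exact Or.inl rfl
  · exact (hwR x hx hxR).imp (fun hxa' => absurd (hxa' ▸ hxR) ha') id

lemma MWalkLen.of_forall_mem_zip {a : V} {l : List V}
    (h : ∀ s ∈ (a :: l).zip l, MEdge G R s.1 s.2) :
    MWalkLen G R a ((a :: l).getLast (List.cons_ne_nil a l))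
      (((a :: l).zip l).map fun s => G.dist s.1 s.2).sum := by
  induction l generalizing a with
  | nil => exact MWalkLen.nil a
  | cons b l ih =>
    simp only [List.zip_cons_cons, List.mem_cons, forall_eq_or_imp] at h
    rw [List.getLast_cons_cons, List.zip_cons_cons, List.map_cons, List.sum_cons]
    exact MWalkLen.cons h.1 (ih h.2)

lemma mEdge_and_sum_dist_of_length_eq_dist [DecidablePred (· ∈ R)] {a b : V}
    (p : G.Walk a b) (hp : p.length = G.dist a b) (hb : b ∈ R) :
    (∀ s ∈ (a :: p.support.tail.filter (· ∈ R)).zip (p.support.tail.filter (· ∈ R)),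
        MEdge G R s.1 s.2) ∧
    (((a :: p.support.tail.filter (· ∈ R)).zip (p.support.tail.filter (· ∈ R))).map
        fun s => G.dist s.1 s.2).sum = G.dist a b := by
  induction p with
  | nil => simp
  | @cons a a' b h q ih =>
    have hq := length_eq_dist_of_subwalk hp (q.isSubwalk_cons h)
    have hdist_ab : G.dist a b = G.dist a' b + 1 := by rw [← hp, ← hq, Walk.length_cons]
    obtain ⟨ihE, ihS⟩ := ih hq hb
    rw [Walk.support_cons, List.tail_cons, ← q.cons_tail_support]
    by_cases ha' : a' ∈ R
    · rw [List.filter_cons_of_pos (by simpa using ha')]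
      simp only [List.zip_cons_cons, List.mem_cons, forall_eq_or_imp, List.map_cons,
        List.sum_cons] at ihS ⊢
      refine ⟨⟨MEdge.of_adj h, ihE⟩, ?_⟩
      rw [ihS, dist_eq_one_iff_adj.mpr h, hdist_ab, add_comm]
    · rw [List.filter_cons_of_neg (by simpa using ha')]
      have hbL : b ∈ q.support.tail.filter (· ∈ R) :=
        List.mem_filter.mpr ⟨Walk.end_mem_tail_support (Walk.not_nil_of_ne
          fun hab => ha' (hab ▸ hb)), by simpa using hb⟩
      obtain ⟨s, l, hL⟩ := List.exists_cons_of_ne_nil (List.ne_nil_of_mem hbL)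
      have hs : s ∈ q.support :=
        List.mem_of_mem_tail (List.mem_of_mem_filter (hL ▸ List.mem_cons_self))
      rw [hL] at ihE ihS ⊢
      have hdist : G.dist a s = G.dist a' s + 1 := by
        have := Walk.dist_add_dist_of_length_eq_dist hp (List.mem_cons_of_mem a hs)
        have := Walk.dist_add_dist_of_length_eq_dist hq hs
        omega
      simp only [List.zip_cons_cons, List.mem_cons, forall_eq_or_imp, List.map_cons,
        List.sum_cons] at ihE ihS ⊢
      exact ⟨⟨ihE.1.cons_of_not_mem h ha' hdist, ihE.2⟩, by omega⟩

end MetaGraph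

theorem meta_path_along_shortest_general (G : SimpleGraph V)
    (R : Set V) [DecidablePred (· ∈ R)] (r r' : V) (hr : r ∈ R) (hr' : r' ∈ R)
    (p : G.Walk r r') (hlen : p.length = G.dist r r') :
    (∀ s ∈ (p.support.filter (· ∈ R)).zip (p.support.filter (· ∈ R)).tail,
        MEdge G R s.1 s.2) ∧
    (((p.support.filter (· ∈ R)).zip (p.support.filter (· ∈ R)).tail).map
        (fun s => G.dist s.1 s.2)).sum = G.dist r r' ∧
    dM G R r r' ≤ (G.dist r r' : ℕ∞) := by
  have hfilter : p.support.filter (· ∈ R) = r :: p.support.tail.filter (· ∈ R) := by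
    conv_lhs => rw [← p.cons_tail_support]
    exact List.filter_cons_of_pos (by simpa using hr)
  have hlast : (p.support.filter (· ∈ R)).getLast (hfilter ▸ List.cons_ne_nil _ _) = r' := by
    rw [List.getLast_filter_of_pos p.support_ne_nil (by simpa [p.getLast_support] using hr'),
      p.getLast_support]
  obtain ⟨hedge, hsum⟩ := mEdge_and_sum_dist_of_length_eq_dist p hlen hr'
  rw [hfilter, List.tail_cons]
  refine ⟨hedge, hsum, sInf_le ⟨G.dist r r', ?_, rfl⟩⟩
  have hwalk := MWalkLen.of_forall_mem_zip hedge
  rw [hsum] at hwalk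
  simpa only [← hfilter, hlast] using hwalk

/-- if `p` is a shortest path between landmarks `r, r'`, and
`l = r = s₀, s₁, …, s_k = r'` is the list of landmarks on `p` in order of
occurrence, then every consecutive pair is a meta-graph edge, the weights
`d_G(sᵢ, sᵢ₊₁)` sum to `d_G(r,r')`, and consequently `d_M(r,r') ≤ d_G(r,r')`. -/
theorem meta_path_along_shortest (G : SimpleGraph V) (hG : G.Connected)
    (R : Set V) [DecidablePred (· ∈ R)] (r r' : V) (hr : r ∈ R) (hr' : r' ∈ R)
    (p : G.Walk r r') (hp : p.IsPath) (hlen : p.length = G.dist r r') :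
    (∀ s ∈ (p.support.filter (· ∈ R)).zip (p.support.filter (· ∈ R)).tail,
        MEdge G R s.1 s.2) ∧
    (((p.support.filter (· ∈ R)).zip (p.support.filter (· ∈ R)).tail).map
        (fun s => G.dist s.1 s.2)).sum = G.dist r r' ∧
    dM G R r r' ≤ (G.dist r r' : ℕ∞) :=
  meta_path_along_shortest_general G R r r' hr hr' p hlen
end

section
/- Let u,v ∈ V\R with d_{G⁻}(u,v) < d⊤_uv, where G⁻ = G[V\R]. Then no shortest u-v path in G passes through any landmark, and the shortest path graph G_uv (in G) equals the shortest path graph of u and v computed in G⁻. -/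
/-!
A shortest `u`-`v` walk through a landmark splits at its first landmark `r` and at its last
landmark `r'` into three pieces, each again a shortest walk. The outer pieces witness
`(r, d(u,r)) ∈ L(u)` and `(r', d(v,r')) ∈ L(v)`, and the middle one, cut at its interior
landmarks, is a walk of the meta-graph, so `d⊤_uv ≤ d(u,v) ≤ d_{G⁻}(u,v)`. Hence under
`d_{G⁻}(u,v) < d⊤_uv` every shortest walk of `G` stays in `G⁻`, and `G⁻` then has the same
distance and the same shortest walks between `u` and `v`.
-/

open SimpleGraph

variable {V : Type}

/-- A vertex lies on some shortest `u`-`v` path of `G'`. -/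
def onSPvert {W : Type*} (G' : SimpleGraph W) (u v x : W) : Prop :=
  ∃ w : G'.Walk u v, w.length = G'.dist u v ∧ x ∈ w.support

/-- An edge lies on some shortest `u`-`v` path of `G'`. -/
def onSPedge {W : Type*} (G' : SimpleGraph W) (u v : W) (e : Sym2 W) : Prop :=
  ∃ w : G'.Walk u v, w.length = G'.dist u v ∧ e ∈ w.edges

namespace SimpleGraph

variable {W : Type*} {G : SimpleGraph W}

theorem Walk.mem_support_map_iff_of_injective {W' : Type*} {G' : SimpleGraph W'}
    {f : G →g G'} {a b : W} (p : G.Walk a b) (hf : Function.Injective f) (x : W) :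
    f x ∈ (p.map f).support ↔ x ∈ p.support := by
  rw [Walk.support_map]
  exact List.mem_map_of_injective hf

theorem Walk.mem_edges_map_iff_of_injective {W' : Type*} {G' : SimpleGraph W'}
    {f : G →g G'} {a b : W} (p : G.Walk a b) (hf : Function.Injective f) (x y : W) :
    s(f x, f y) ∈ (p.map f).edges ↔ s(x, y) ∈ p.edges := by
  rw [Walk.edges_map, ← Sym2.map_mk]
  exact List.mem_map_of_injective (Sym2.map.injective hf)

theorem Walk.exists_eq_append_first_mem {S : Set W} {a b : W}
    (w : G.Walk a b) (h : ∃ x ∈ w.support, x ∈ S) :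
    ∃ r ∈ S, ∃ (w₁ : G.Walk a r) (w₂ : G.Walk r b),
      w = w₁.append w₂ ∧ ∀ x ∈ w₁.support, x ∈ S → x = r := by
  induction w with
  | nil =>
    obtain ⟨x, hx, hxS⟩ := h
    rw [Walk.support_nil, List.mem_singleton] at hx
    subst hx
    exact ⟨x, hxS, .nil, .nil, rfl, by simp⟩
  | @cons a c b hadj p ih =>
    by_cases haS : a ∈ S
    · exact ⟨a, haS, .nil, .cons hadj p, rfl, by simp⟩
    · have hp : ∃ x ∈ p.support, x ∈ S := by
        obtain ⟨x, hx, hxS⟩ := h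
        rw [Walk.support_cons, List.mem_cons] at hx
        exact ⟨x, hx.resolve_left (by rintro rfl; exact haS hxS), hxS⟩
      obtain ⟨r, hrS, w₁, w₂, rfl, hw₁⟩ := ih hp
      refine ⟨r, hrS, .cons hadj w₁, w₂, rfl, ?_⟩
      rintro x hx hxS
      rw [Walk.support_cons, List.mem_cons] at hx
      exact hx.elim (by rintro rfl; exact absurd hxS haS) (hw₁ x · hxS)

section Induce

variable {s : Set W} {u v : W}

theorem dist_le_edist_induce (hu : u ∈ s) (hv : v ∈ s) :
    (G.dist u v : ℕ∞) ≤ (G.induce s).edist ⟨u, hu⟩ ⟨v, hv⟩ := by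
  by_cases hr : (G.induce s).Reachable ⟨u, hu⟩ ⟨v, hv⟩
  · obtain ⟨p, hp⟩ := hr.exists_walk_length_eq_edist
    rw [← hp, ← Walk.length_map (Embedding.induce s).toHom]
    exact_mod_cast G.dist_le _
  · simp [edist_eq_top_of_not_reachable hr]

theorem Walk.length_induce (w : G.Walk u v) (hw : ∀ x ∈ w.support, x ∈ s) :
    (w.induce s hw).length = w.length := by
  induction w <;> simp_all

variable (hreach : G.Reachable u v)
  (hs : ∀ w : G.Walk u v, w.length = G.dist u v → ∀ x ∈ w.support, x ∈ s)
include hreach hs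

theorem dist_induce_eq_of_forall_length_eq_dist (hu : u ∈ s) (hv : v ∈ s) :
    (G.induce s).dist ⟨u, hu⟩ ⟨v, hv⟩ = G.dist u v := by
  obtain ⟨w, hw⟩ := hreach.exists_walk_length_eq_dist
  let w' := w.induce s (hs w hw)
  have hle : (G.induce s).dist ⟨u, hu⟩ ⟨v, hv⟩ ≤ G.dist u v :=
    hw ▸ w.length_induce (hs w hw) ▸ (G.induce s).dist_le w'
  have hge := dist_le_edist_induce (G := G) hu hv
  rw [← w'.reachable.coe_dist_eq_edist] at hge
  exact le_antisymm hle (by exact_mod_cast hge)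

theorem onSPvert_iff_onSPvert_induce (hu : u ∈ s) (hv : v ∈ s) (x : W) :
    onSPvert G u v x ↔ ∃ hx : x ∈ s, onSPvert (G.induce s) ⟨u, hu⟩ ⟨v, hv⟩ ⟨x, hx⟩ := by
  have hdist := dist_induce_eq_of_forall_length_eq_dist hreach hs hu hv
  have hinj : Function.Injective (Embedding.induce (G := G) s).toHom := Subtype.val_injective
  constructor
  · rintro ⟨w, hw, hx⟩
    exact ⟨hs w hw x hx, w.induce s (hs w hw), by rw [Walk.length_induce, hw, hdist],
      by simp [hx]⟩
  · rintro ⟨hx, w, hw, hxw⟩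
    exact ⟨w.map (Embedding.induce s).toHom, (w.length_map _).trans (hw.trans hdist),
      (w.mem_support_map_iff_of_injective hinj _).2 hxw⟩

theorem onSPedge_iff_onSPedge_induce (hu : u ∈ s) (hv : v ∈ s) (x y : W) :
    onSPedge G u v s(x, y) ↔ ∃ (hx : x ∈ s) (hy : y ∈ s),
      onSPedge (G.induce s) ⟨u, hu⟩ ⟨v, hv⟩ s(⟨x, hx⟩, ⟨y, hy⟩) := by
  have hdist := dist_induce_eq_of_forall_length_eq_dist hreach hs hu hv
  have hinj : Function.Injective (Embedding.induce (G := G) s).toHom := Subtype.val_injective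
  constructor
  · rintro ⟨w, hw, he⟩
    have hx := hs w hw x (w.fst_mem_support_of_mem_edges he)
    have hy := hs w hw y (w.snd_mem_support_of_mem_edges he)
    refine ⟨hx, hy, w.induce s (hs w hw), by rw [Walk.length_induce, hw, hdist], ?_⟩
    rw [← (w.induce s _).mem_edges_map_iff_of_injective hinj, Walk.map_induce]
    exact he
  · rintro ⟨hx, hy, w, hw, he⟩
    exact ⟨w.map (Embedding.induce s).toHom, (w.length_map _).trans (hw.trans hdist),
      (w.mem_edges_map_iff_of_injective hinj _ _).2 he⟩

end Induce

end SimpleGraph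

theorem MWalkLen.append {G : SimpleGraph V} {R : Set V} {r s t : V} {n m : ℕ}
    (h₁ : MWalkLen G R r s n) (h₂ : MWalkLen G R s t m) : MWalkLen G R r t (n + m) := by
  induction h₁ with
  | nil => simpa using h₂
  | cons he _ ih => rw [add_assoc]; exact .cons he (ih h₂)

theorem MWalkLen.of_length_eq_dist {G : SimpleGraph V} {R : Set V} {r r' : V}
    (w : G.Walk r r') (hw : w.length = G.dist r r') : MWalkLen G R r r' w.length := by
  classical
  induction hn : w.length using Nat.strong_induction_on generalizing r r' with
  | _ n ih =>
  subst hn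
  by_cases hclean : ∀ x ∈ w.support, x ∈ R → x = r ∨ x = r'
  · by_cases hrr : r = r'
    · subst hrr
      rw [hw, G.dist_self]
      exact .nil r
    · simpa [hw] using MWalkLen.cons (n := 0) ⟨hrr, w, hw, hclean⟩ (.nil r')
  · push Not at hclean
    obtain ⟨s, hs, hsR, hsr, hsr'⟩ := hclean
    have h₁ := length_eq_dist_of_subwalk hw (w.isSubwalk_takeUntil hs)
    have h₂ := length_eq_dist_of_subwalk hw (w.isSubwalk_dropUntil hs)
    have hpos₁ : (w.takeUntil s hs).length ≠ 0 := fun h ↦ hsr (Walk.eq_of_length_eq_zero h).symm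
    have hpos₂ : (w.dropUntil s hs).length ≠ 0 := fun h ↦ hsr' (Walk.eq_of_length_eq_zero h)
    have hlen : (w.takeUntil s hs).length + (w.dropUntil s hs).length = w.length := by
      rw [← Walk.length_append, w.take_spec]
    rw [← hlen]
    exact (ih _ (by omega) _ h₁ rfl).append (ih _ (by omega) _ h₂ rfl)

theorem dM_le_dist {G : SimpleGraph V} {R : Set V} {r r' : V}
    (w : G.Walk r r') (hw : w.length = G.dist r r') : dM G R r r' ≤ G.dist r r' :=
  hw ▸ sInf_le ⟨_, .of_length_eq_dist w hw, rfl⟩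

theorem dTop_le_dist_of_mem_support {G : SimpleGraph V} {R : Set V} {u v : V}
    (w : G.Walk u v) (hw : w.length = G.dist u v) (hR : ∃ x ∈ w.support, x ∈ R) :
    dTop G R u v ≤ G.dist u v := by
  obtain ⟨r, hr, w₁, w₂, rfl, hw₁⟩ := w.exists_eq_append_first_mem hR
  obtain ⟨r', hr', w₃, w₄, hw₂, hw₃⟩ := w₂.reverse.exists_eq_append_first_mem ⟨r, by simp, hr⟩
  have d₁ : w₁.length = G.dist u r :=
    length_eq_dist_of_subwalk hw (Walk.isSubwalk_of_append_left rfl)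
  have d₂ : w₂.reverse.length = G.dist v r := by
    rw [Walk.length_reverse, G.dist_comm]
    exact length_eq_dist_of_subwalk hw (Walk.isSubwalk_of_append_right rfl)
  have d₃ : w₃.length = G.dist v r' :=
    length_eq_dist_of_subwalk d₂ (Walk.isSubwalk_of_append_left hw₂)
  have d₄ : w₄.reverse.length = G.dist r r' := by
    rw [Walk.length_reverse, G.dist_comm]
    exact length_eq_dist_of_subwalk d₂ (Walk.isSubwalk_of_append_right hw₂)
  have hlen : G.dist u r + G.dist r r' + G.dist v r' = G.dist u v := by
    have := congrArg Walk.length hw₂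
    simp only [Walk.length_append, Walk.length_reverse] at this hw d₄
    omega
  calc dTop G R u v ≤ G.dist u r + dM G R r r' + G.dist v r' :=
        sInf_le ⟨r, r', hr, hr', ⟨w₁, d₁, hw₁⟩, ⟨w₃, d₃, hw₃⟩, rfl⟩
    _ ≤ G.dist u r + G.dist r r' + G.dist v r' := by gcongr; exact dM_le_dist _ d₄
    _ = G.dist u v := by exact_mod_cast hlen

theorem spg_eq_spg_of_sparsified_general (G : SimpleGraph V)
    (R : Set V) (u v : V) (hu : u ∉ R) (hv : v ∉ R)
    (h : (G.induce {x | x ∉ R}).edist ⟨u, hu⟩ ⟨v, hv⟩ < dTop G R u v) :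
    (∀ w : G.Walk u v, w.length = G.dist u v → ∀ x ∈ w.support, x ∉ R) ∧
    (∀ x : V, onSPvert G u v x ↔
      ∃ hx : x ∉ R, onSPvert (G.induce {y | y ∉ R}) ⟨u, hu⟩ ⟨v, hv⟩ ⟨x, hx⟩) ∧
    (∀ x y : V, onSPedge G u v s(x, y) ↔
      ∃ (hx : x ∉ R) (hy : y ∉ R),
        onSPedge (G.induce {z | z ∉ R}) ⟨u, hu⟩ ⟨v, hv⟩ s(⟨x, hx⟩, ⟨y, hy⟩)) := by
  have hreach : G.Reachable u v :=
    (reachable_of_edist_ne_top h.ne_top).map (Embedding.induce _).toHom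
  have avoid : ∀ w : G.Walk u v, w.length = G.dist u v → ∀ x ∈ w.support, x ∉ R :=
    fun w hw x hx hxR ↦ ((dTop_le_dist_of_mem_support w hw ⟨x, hx, hxR⟩).trans
      (dist_le_edist_induce hu hv)).not_gt h
  exact ⟨avoid, onSPvert_iff_onSPvert_induce hreach avoid hu hv,
    onSPedge_iff_onSPedge_induce hreach avoid hu hv⟩

/-- if `d_{G⁻}(u,v) < d⊤_uv`, then no shortest `u`-`v` path of `G`
passes through a landmark, and the shortest path graph `G_uv` computed in `G`
coincides (vertices and edges) with the one computed in `G⁻ = G[V \ R]`. -/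
theorem spg_eq_spg_of_sparsified (G : SimpleGraph V) (hG : G.Connected)
    (R : Set V) (u v : V) (hu : u ∉ R) (hv : v ∉ R)
    (h : (G.induce {x | x ∉ R}).edist ⟨u, hu⟩ ⟨v, hv⟩ < dTop G R u v)
    (hfact : (G.dist u v : ℕ∞) =
      min ((G.induce {x | x ∉ R}).edist ⟨u, hu⟩ ⟨v, hv⟩) (dTop G R u v)) :
    (∀ w : G.Walk u v, w.length = G.dist u v → ∀ x ∈ w.support, x ∉ R) ∧
    (∀ x : V, onSPvert G u v x ↔
      ∃ hx : x ∉ R, onSPvert (G.induce {y | y ∉ R}) ⟨u, hu⟩ ⟨v, hv⟩ ⟨x, hx⟩) ∧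
    (∀ x y : V, onSPedge G u v s(x, y) ↔
      ∃ (hx : x ∉ R) (hy : y ∉ R),
        onSPedge (G.induce {z | z ∉ R}) ⟨u, hu⟩ ⟨v, hv⟩ s(⟨x, hx⟩, ⟨y, hy⟩)) :=
  spg_eq_spg_of_sparsified_general G R u v hu hv h
end

section
/- For any vertex u ∈ V\R and landmark r ∈ R, there exist a landmark r' and an entry (r', δ_ur') ∈ L(u) such that δ_ur' + d_M(r', r) = d_G(u,r). In other words, distances from any vertex to any landmark can be exactly recovered from the path labelling together with meta-graph distances. -/
/-!
Follow a shortest `u`-`r` path and cut it at the first landmark `t` it meets. The prefix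
witnesses the label `(t, d_G(u,t)) ∈ L(u)`, and the suffix is a shortest `t`-`r` path. Cutting
a shortest path between landmarks at each landmark on it splits it into meta-edges, so
`d_M(t,r) ≤ d_G(t,r)`; the reverse inequality is the triangle inequality in `G`.
-/

open SimpleGraph

variable {V : Type}

variable {G : SimpleGraph V} {R : Set V}

namespace SimpleGraph.Walk

lemma length_eq_dist_of_append {u v w : V} {p : G.Walk u v} {q : G.Walk v w}
    (h : (p.append q).length = G.dist u w) :
    p.length = G.dist u v ∧ q.length = G.dist v w :=
  ⟨length_eq_dist_of_subwalk h (isSubwalk_of_append_left rfl),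
    length_eq_dist_of_subwalk h (isSubwalk_of_append_right rfl)⟩

lemma exists_eq_append_first_mem_s14 {S : Set V} {u v : V} (w : G.Walk u v) (hv : v ∈ S) :
    ∃ t ∈ S, ∃ (w₁ : G.Walk u t) (w₂ : G.Walk t v),
      w = w₁.append w₂ ∧ ∀ x ∈ w₁.support, x ∈ S → x = t := by
  induction w with
  | nil => exact ⟨_, hv, nil, nil, rfl, by simp⟩
  | @cons a b c hab p ih =>
    by_cases ha : a ∈ S
    · exact ⟨a, ha, nil, cons hab p, rfl, by simp⟩
    obtain ⟨t, ht, w₁, w₂, rfl, hfirst⟩ := ih hv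
    refine ⟨t, ht, cons hab w₁, w₂, rfl, ?_⟩
    rintro x hx hxS
    rcases (support_cons _ _ ▸ List.mem_cons).mp hx with rfl | hx
    · exact absurd hxS ha
    · exact hfirst x hx hxS

end SimpleGraph.Walk

lemma MEdge.reachable {r r' : V} (h : MEdge G R r r') : G.Reachable r r' :=
  let ⟨_, w, _⟩ := h; ⟨w⟩

namespace MWalkLen

lemma append_s14 {a b c : V} {m n : ℕ} (h₁ : MWalkLen G R a b m) (h₂ : MWalkLen G R b c n) :
    MWalkLen G R a c (m + n) := by
  induction h₁ with
  | nil => simpa using h₂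
  | cons h _ ih => rw [add_assoc]; exact .cons h (ih h₂)

lemma dist_le {a b : V} {n : ℕ} (h : MWalkLen G R a b n) : G.dist a b ≤ n := by
  induction h with
  | nil => simp
  | @cons r r' r'' k h _ ih =>
    calc G.dist r r'' ≤ G.dist r r' + G.dist r' r'' := h.reachable.dist_triangle_left r''
      _ ≤ G.dist r r' + k := by omega

lemma of_length_eq_dist_s14 {s r : V} (w : G.Walk s r) (hw : w.length = G.dist s r)
    (hs : s ∈ R) (hr : r ∈ R) : MWalkLen G R s r w.length := by
  classical
  induction hn : w.length using Nat.strong_induction_on generalizing s r with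
  | _ n ih =>
  by_cases hsr : s = r
  · subst hsr
    rw [← hn, hw, dist_self]
    exact .nil s
  by_cases hedge : ∀ x ∈ w.support, x ∈ R → x = s ∨ x = r
  · simpa [← hn, hw] using MWalkLen.cons ⟨hsr, w, hw, hedge⟩ (.nil r)
  push Not at hedge
  obtain ⟨t, ht, htR, hst, htr⟩ := hedge
  rw [← w.take_spec ht] at hw hn
  obtain ⟨h₁, h₂⟩ := Walk.length_eq_dist_of_append hw
  have hpos₁ : (w.takeUntil t ht).length ≠ 0 := fun h => hst (Walk.eq_of_length_eq_zero h).symm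
  have hpos₂ : (w.dropUntil t ht).length ≠ 0 := fun h => htr (Walk.eq_of_length_eq_zero h)
  rw [Walk.length_append] at hn
  subst hn
  exact (ih _ (by omega) _ h₁ hs htR rfl).append_s14 (ih _ (by omega) _ h₂ htR hr rfl)

end MWalkLen

lemma dM_eq_dist_s14 {s r : V} (hs : s ∈ R) (hr : r ∈ R) (hsr : G.Reachable s r) :
    dM G R s r = G.dist s r := by
  obtain ⟨w, hw⟩ := hsr.exists_walk_length_eq_dist
  refine le_antisymm (sInf_le ⟨_, hw ▸ MWalkLen.of_length_eq_dist_s14 w hw hs hr, rfl⟩) (le_sInf ?_)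
  rintro x ⟨n, hn, rfl⟩
  exact_mod_cast hn.dist_le

theorem dist_to_landmark_recovered_general (G : SimpleGraph V) (hG : G.Connected)
    (R : Set V) (u : V) (r : V) (hr : r ∈ R) :
    ∃ r' ∈ R, LEntry G R u r' ∧
      (G.dist u r' : ℕ∞) + dM G R r' r = (G.dist u r : ℕ∞) := by
  obtain ⟨w, hw⟩ := hG.exists_walk_length_eq_dist u r
  obtain ⟨t, ht, w₁, w₂, rfl, hfirst⟩ := w.exists_eq_append_first_mem_s14 hr
  obtain ⟨h₁, h₂⟩ := Walk.length_eq_dist_of_append hw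
  refine ⟨t, ht, ⟨w₁, h₁, hfirst⟩, ?_⟩
  rw [dM_eq_dist_s14 ht hr (hG t r), ← h₁, ← h₂, ← hw, Walk.length_append, Nat.cast_add]

/-- distances from any vertex to any landmark are recovered from
the path labelling together with meta-graph distances: some labelled landmark
`r'` satisfies `δ_ur' + d_M(r',r) = d_G(u,r)`. -/
theorem dist_to_landmark_recovered (G : SimpleGraph V) (hG : G.Connected)
    (R : Set V) (u : V) (hu : u ∉ R) (r : V) (hr : r ∈ R) :
    ∃ r' ∈ R, LEntry G R u r' ∧
      (G.dist u r' : ℕ∞) + dM G R r' r = (G.dist u r : ℕ∞) :=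
  dist_to_landmark_recovered_general G hG R u r hr
end
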